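/- Let A = K[[Y]] be the power series ring over a field K of characteristic zero, and let σ ∈ GL_2(A) be the matrix [[1, Y],[0, -1]]. Then there is no way to extend the A-linear action of the group G = {1, σ} on R = A[X_1, X_2] to a D-linear action on D[X_1, X_2], where D = A⟨δ⟩ is the ring of K-linear differential operators on A with δ = ∂/∂Y: that is, there is no ring automorphism of D[X_1,X_2] extending σ that fixes D and acts on X_1, X_2 by the matrix σ. -/
import Mathlib


/-- Let `A = K⟦Y⟧` over a field `K` of characteristic zero, and let `D` be
the ring of `K`-linear differential operators on `A`, containing `A` (via `ι`) and the
operator `δ = ∂/∂Y` which satisfies `δ·Y = Y·δ + 1`.  Let `σ ∈ GL₂(A)` be the matrix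
`[[1, Y], [0, -1]]`, acting `A`-linearly on `R = A[X₁, X₂]` by `σ(X₁) = X₁`,
`σ(X₂) = Y·X₁ − X₂`.  Then there is no ring automorphism of `D[X₁, X₂]`
(realized as `Polynomial (Polynomial D)` with `X₁` the inner and `X₂` the outer variable)
which fixes `D` and acts on `X₁, X₂` by the matrix `σ`. -/
theorem stmt10 {K D : Type*} [Field K] [CharZero K] [Ring D]
    (ι : PowerSeries K →+* D) (hι : Function.Injective ι) (δ : D)
    (hδ : δ * ι PowerSeries.X = ι PowerSeries.X * δ + 1) :
    ¬ ∃ τ : Polynomial (Polynomial D) ≃+* Polynomial (Polynomial D),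
        (∀ d : D, τ (Polynomial.C (Polynomial.C d)) = Polynomial.C (Polynomial.C d)) ∧
        τ (Polynomial.C Polynomial.X) = Polynomial.C Polynomial.X ∧
        τ Polynomial.X =
          Polynomial.C (Polynomial.C (ι PowerSeries.X)) * Polynomial.C Polynomial.X -
            Polynomial.X := by
  rintro ⟨τ, hD, h1, h2⟩
  -- D is nontrivial
  have hnt : (1 : D) ≠ 0 := by
    intro h
    have : ι 1 = ι 0 := by simp [h]
    exact one_ne_zero (hι this)
  set Y : D := ι PowerSeries.X with hY
  -- apply τ to the commutation X₂ * δ = δ * X₂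
  have comm : (Polynomial.X : Polynomial (Polynomial D)) * Polynomial.C (Polynomial.C δ)
      = Polynomial.C (Polynomial.C δ) * Polynomial.X := Polynomial.X_mul
  have e := congrArg τ comm
  rw [map_mul, map_mul, hD, h2] at e
  -- expand
  have e2 : Polynomial.C (Polynomial.C Y) * Polynomial.C Polynomial.X *
        Polynomial.C (Polynomial.C δ)
      = Polynomial.C (Polynomial.C δ) * (Polynomial.C (Polynomial.C Y) *
        Polynomial.C Polynomial.X) := by
    rw [sub_mul, mul_sub, Polynomial.X_mul] at e
    exact sub_left_inj.mp e
  rw [← map_mul, ← map_mul, ← map_mul] at e2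
  have e3 := Polynomial.C_injective e2
  have e4 : Y * δ = δ * Y := by
    have := congrArg (fun p => Polynomial.coeff p 1) e3
    simpa [Polynomial.X_mul, mul_assoc] using this
  rw [hδ] at e4
  exact hnt (left_eq_add.mp e4)
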